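/- arXiv:1411.2288 — 2 statements merged into one kernel-verified Lean document; each statement's English description precedes it below -/
import Mathlib

section
/- Let d ≥ 2, r ≥ 1, ε > 0, and let S = {γ₁, …, γ_{2r}} ⊂ SL_d(ℝ) be a symmetric set of pairwise distinct proximal matrices such that both S and the dual set S* = {γ₁*, …, γ_{2r}*} are ε-Schottky. If i ≠ j, X ∈ b(γᵢ⁺, ε) is a line in ℝ^d, and Y ∈ b((γⱼ*)⁺, ε) is a line in (ℝ^d)*, then X and the hyperplane ker Y = {v ∈ ℝ^d : θ(v) = 0 for all θ ∈ Y} together span ℝ^d; equivalently, X is not contained in ker Y. -/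
/-! Suppose `X ⊆ ker Y`. Pick unit vectors `x ∈ X`, `a ∈ γᵢ⁺` and unit functionals `θ ∈ Y`,
`θ₀ ∈ (γⱼ*)⁺` with `‖x - a‖ < 2ε` and `‖θ - θ₀‖ < 2ε`. Since `γⱼ*` is the transpose of `γⱼ⁻¹`,
the two have the same characteristic polynomial, so `θ₀` is an eigenfunctional of `γⱼ⁻¹` for its
simple top eigenvalue. Hence `θ₀` vanishes on the invariant complement `(γⱼ⁻¹)⁻` of the top
eigenline, and by counting dimensions `ker θ₀ = (γⱼ⁻¹)⁻`. As `θ x = 0`, `|θ₀ x| < 2ε`, so `x` is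
within `4ε` of a unit vector of `(γⱼ⁻¹)⁻` and `a` within `6ε`, contradicting the Schottky
condition `dist(γᵢ⁺, (γⱼ⁻¹)⁻) ≥ 6ε`. -/

open Polynomial Filter
open scoped Classical

noncomputable section

namespace Amalgam

variable {W : Type*} [NormedAddCommGroup W] [NormedSpace ℝ W]

/-- The distance between two subspaces of a normed space: the infimum of `‖x - y‖` over
unit vectors `x ∈ X`, `y ∈ Y`.  For one-dimensional subspaces this is the metric on
projective space; for a line and a hyperplane it is the distance from the point of
projective space to the subset of projective space determined by the hyperplane. -/
def sdist (X Y : Submodule ℝ W) : ℝ :=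
  sInf {r : ℝ | ∃ x ∈ X, ∃ y ∈ Y, ‖x‖ = 1 ∧ ‖y‖ = 1 ∧ r = ‖x - y‖}

/-- A point of projective space, i.e. a line through the origin. -/
def IsLine (X : Submodule ℝ W) : Prop := Module.finrank ℝ X = 1

/-- The diameter of the projective space of `W`. -/
def projDiam (W : Type*) [NormedAddCommGroup W] [NormedSpace ℝ W] : ℝ :=
  sSup {t : ℝ | ∃ X Y : Submodule ℝ W, IsLine X ∧ IsLine Y ∧ t = sdist X Y}

variable [FiniteDimensional ℝ W]

/-- `f` is proximal: its characteristic polynomial has a unique complex root of maximal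
modulus, and this root is real with multiplicity one. -/
def IsProximal (f : W →ₗ[ℝ] W) : Prop :=
  ∃ lam : ℝ,
    (Polynomial.map (algebraMap ℝ ℂ) (LinearMap.charpoly f)).roots.count (lam : ℂ) = 1 ∧
    ∀ μ ∈ (Polynomial.map (algebraMap ℝ ℂ) (LinearMap.charpoly f)).roots,
      μ ≠ (lam : ℂ) → ‖μ‖ < |lam|

/-- The top eigenvalue of a proximal transformation (junk value `0` otherwise). -/
def topEig (f : W →ₗ[ℝ] W) : ℝ :=
  if h : IsProximal f then h.choose else 0

/-- The attracting eigenline `γ⁺` of a proximal transformation: the eigenspace of the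
eigenvalue of maximal modulus. -/
def attLine (f : W →ₗ[ℝ] W) : Submodule ℝ W :=
  LinearMap.ker (f - topEig f • LinearMap.id)

/-- The repelling hyperplane `γ⁻` of a proximal transformation: the unique invariant
complement of the attracting line. -/
def repHyp (f : W →ₗ[ℝ] W) : Submodule ℝ W :=
  if h : ∃ H : Submodule ℝ W, Submodule.map f H ≤ H ∧ IsCompl (attLine f) H
  then h.choose else ⊥

/-- `f` is `ε`-proximal: it is proximal, `dist(γ⁺, γ⁻) ≥ 2ε`, the induced action on
projective space is `ε`-Lipschitz on `B(γ⁻, ε)`, and maps `B(γ⁻, ε)` into `b(γ⁺, ε)`. -/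
def IsEpsProximal (ε : ℝ) (f : W →ₗ[ℝ] W) : Prop :=
  IsProximal f ∧
  2 * ε ≤ sdist (attLine f) (repHyp f) ∧
  (∀ X Y : Submodule ℝ W, IsLine X → IsLine Y →
      ε ≤ sdist X (repHyp f) → ε ≤ sdist Y (repHyp f) →
      sdist (X.map f) (Y.map f) ≤ ε * sdist X Y) ∧
  (∀ X : Submodule ℝ W, IsLine X → ε ≤ sdist X (repHyp f) →
      ε ≥ sdist (X.map f) (attLine f))

/-- An indexed family `f` (with `g i` playing the role of `(f i)⁻¹`) is `ε`-Schottky: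
each member is `ε`-proximal and `dist((fᵢ)⁺, (fⱼ⁻¹)⁻) ≥ 6ε` for `i ≠ j`. -/
def IsSchottkyFam {ι : Type*} (ε : ℝ) (f g : ι → (W →ₗ[ℝ] W)) : Prop :=
  (∀ i, IsEpsProximal ε (f i)) ∧
  ∀ i j, i ≠ j → 6 * ε ≤ sdist (attLine (f i)) (repHyp (g j))


abbrev E (d : ℕ) := EuclideanSpace ℝ (Fin d)
abbrev SL (d : ℕ) := Matrix.SpecialLinearGroup (Fin d) ℝ
abbrev Dual' (d : ℕ) := StrongDual ℝ (E d)

/-- The linear endomorphism of Euclidean space determined by a matrix in `SL_d(ℝ)`. -/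
def toEnd {d : ℕ} (g : SL d) : E d →ₗ[ℝ] E d :=
  Matrix.toEuclideanLin (g : Matrix (Fin d) (Fin d) ℝ)

/-- The same map as a continuous linear map. -/
def toCLM {d : ℕ} (g : SL d) : E d →L[ℝ] E d :=
  LinearMap.toContinuousLinearMap (toEnd g)

/-- The dual transformation `γ* : θ ↦ θ ∘ γ⁻¹` acting on the dual space `(ℝ^d)*`
(equipped with the dual norm). -/
def dualEnd {d : ℕ} (g : SL d) : Dual' d →ₗ[ℝ] Dual' d where
  toFun θ := θ.comp (toCLM g⁻¹)
  map_add' θ₁ θ₂ := by ext v; simp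
  map_smul' c θ := by ext v; simp

/-- The kernel of a set of functionals: `{v : φ(v) = 0 for all φ ∈ Y}`. -/
def dualKer {d : ℕ} (Y : Submodule ℝ (Dual' d)) : Submodule ℝ (E d) where
  carrier := {v | ∀ φ ∈ Y, φ v = 0}
  add_mem' := by
    intro a b ha hb φ hφ
    simp [map_add, ha φ hφ, hb φ hφ]
  zero_mem' := by intro φ hφ; simp
  smul_mem' := by
    intro c a ha φ hφ
    simp [ha φ hφ]

/-- The annihilator of a subspace inside the dual space. -/
def annih {d : ℕ} (U : Submodule ℝ (E d)) : Submodule ℝ (Dual' d) where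
  carrier := {φ | ∀ v ∈ U, φ v = 0}
  add_mem' := by
    intro a b ha hb v hv
    simp [ha v hv, hb v hv]
  zero_mem' := by intro v hv; simp
  smul_mem' := by
    intro c a ha v hv
    simp [ha v hv]

/-- The operator norm of `g ∈ SL_d(ℝ)` (with respect to the Euclidean norm). -/
def opN {d : ℕ} (g : SL d) : ℝ := ‖toCLM g‖

/-- The second compound matrix of a `d × d` matrix: the matrix of `2 × 2` minors,
indexed by increasingly ordered pairs. -/
def compound2 {d : ℕ} (g : Matrix (Fin d) (Fin d) ℝ) :
    Matrix {p : Fin d × Fin d // p.1 < p.2} {p : Fin d × Fin d // p.1 < p.2} ℝ :=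
  fun p q => g p.1.1 q.1.1 * g p.1.2 q.1.2 - g p.1.1 q.1.2 * g p.1.2 q.1.1

/-- The operator norm of the second compound matrix (Euclidean norms). -/
def c2norm {d : ℕ} (g : Matrix (Fin d) (Fin d) ℝ) : ℝ :=
  ‖LinearMap.toContinuousLinearMap (Matrix.toEuclideanLin (compound2 g))‖


/-- A reduced word in the set `S`: a nonempty finite sequence of elements of `S` in which
no letter is followed by its inverse. -/
def IsReducedWord {d : ℕ} (S : Set (SL d)) (w : List (SL d)) : Prop :=
  w ≠ [] ∧ (∀ a ∈ w, a ∈ S) ∧ List.Chain' (fun a b => b ≠ a⁻¹) w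

/-- An infinite reduced word in the set `S`. -/
def IsInfReducedWord {d : ℕ} (S : Set (SL d)) (x : ℕ → SL d) : Prop :=
  (∀ i, x i ∈ S) ∧ ∀ i, x (i + 1) ≠ (x i)⁻¹

/-- The partial product `x₀ x₁ ⋯ x_n` of an infinite word. -/
def wordProd {d : ℕ} (x : ℕ → SL d) (n : ℕ) : SL d :=
  ((List.range (n + 1)).map x).prod

/-- A family of matrices is symmetric if it is closed under inverses. -/
def SymmFam {ι : Type*} {d : ℕ} (γ : ι → SL d) : Prop :=
  ∀ i, ∃ j, γ j = (γ i)⁻¹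

/-- The family `γ` is `ε`-Schottky as acting on `ℙ(ℝ^d)`. -/
def PrimalSchottky {ι : Type*} {d : ℕ} (ε : ℝ) (γ : ι → SL d) : Prop :=
  IsSchottkyFam ε (fun i => toEnd (γ i)) (fun i => toEnd ((γ i)⁻¹))

/-- The dual family `γ*` is `ε`-Schottky as acting on `ℙ((ℝ^d)*)`. -/
def DualSchottky {ι : Type*} {d : ℕ} (ε : ℝ) (γ : ι → SL d) : Prop :=
  IsSchottkyFam ε (fun i => dualEnd (γ i)) (fun i => dualEnd ((γ i)⁻¹))

/-- `g` is biproximal: both `g` and `g⁻¹` are proximal. -/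
def IsBiproximal {d : ℕ} (g : SL d) : Prop :=
  IsProximal (toEnd g) ∧ IsProximal (toEnd g⁻¹)

/-- A symmetric family of pairwise distinct biproximal matrices is well-positioned if the
attracting lines are pairwise distinct and `γᵢ⁺ ⊄ γⱼ⁻` whenever `γⱼ ≠ γᵢ⁻¹`. -/
def WellPositioned {ι : Type*} {d : ℕ} (γ : ι → SL d) : Prop :=
  (∀ i, IsBiproximal (γ i)) ∧
  (∀ i j, i ≠ j → attLine (toEnd (γ i)) ≠ attLine (toEnd (γ j))) ∧
  (∀ i j, γ j ≠ (γ i)⁻¹ → ¬ attLine (toEnd (γ i)) ≤ repHyp (toEnd (γ j)))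

/-- The spectral radius: maximal modulus of the complex roots of the characteristic
polynomial. -/
def specRad {W : Type*} [NormedAddCommGroup W] [NormedSpace ℝ W] [FiniteDimensional ℝ W]
    (f : W →ₗ[ℝ] W) : ℝ :=
  sSup {t : ℝ | ∃ μ ∈ (Polynomial.map (algebraMap ℝ ℂ) (LinearMap.charpoly f)).roots,
      t = ‖μ‖}

section ProjectiveDistance

variable {V : Type*} [NormedAddCommGroup V] [NormedSpace ℝ V] {X Y : Submodule ℝ V}

lemma sdist_le_norm_sub {x y : V} (hx : x ∈ X) (hy : y ∈ Y) (hx1 : ‖x‖ = 1) (hy1 : ‖y‖ = 1) :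
    sdist X Y ≤ ‖x - y‖ :=
  csInf_le ⟨0, by rintro _ ⟨x, -, y, -, -, -, rfl⟩; exact norm_nonneg _⟩
    ⟨x, hx, y, hy, hx1, hy1, rfl⟩

lemma exists_unit_of_sdist_pos (h : 0 < sdist X Y) :
    (∃ x ∈ X, ‖x‖ = 1) ∧ ∃ y ∈ Y, ‖y‖ = 1 := by
  by_contra hne
  have hempty : {r : ℝ | ∃ x ∈ X, ∃ y ∈ Y, ‖x‖ = 1 ∧ ‖y‖ = 1 ∧ r = ‖x - y‖} = ∅ :=
    Set.eq_empty_of_forall_notMem fun _ ⟨x, hx, y, hy, hx1, hy1, _⟩ =>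
      hne ⟨⟨x, hx, hx1⟩, ⟨y, hy, hy1⟩⟩
  rw [sdist, hempty, Real.sInf_empty] at h
  exact h.false

lemma exists_norm_sub_lt_of_sdist_lt {c : ℝ} (h : sdist X Y < c)
    (hX : ∃ x ∈ X, ‖x‖ = 1) (hY : ∃ y ∈ Y, ‖y‖ = 1) :
    ∃ x ∈ X, ∃ y ∈ Y, ‖x‖ = 1 ∧ ‖y‖ = 1 ∧ ‖x - y‖ < c := by
  obtain ⟨x₀, hx₀, hx₀1⟩ := hX
  obtain ⟨y₀, hy₀, hy₀1⟩ := hY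
  obtain ⟨_, ⟨x, hx, y, hy, hx1, hy1, rfl⟩, hlt⟩ :=
    exists_lt_of_csInf_lt (by exact ⟨_, x₀, hx₀, y₀, hy₀, hx₀1, hy₀1, rfl⟩) h
  exact ⟨x, hx, y, hy, hx1, hy1, hlt⟩

lemma IsLine.exists_norm_eq_one (hX : IsLine X) : ∃ x ∈ X, ‖x‖ = 1 := by
  have hne : X ≠ ⊥ := by
    rintro rfl
    simp [IsLine] at hX
  obtain ⟨v, hv, hv0⟩ := (Submodule.ne_bot_iff X).1 hne
  exact ⟨‖v‖⁻¹ • v, X.smul_mem _ hv, norm_smul_inv_norm hv0⟩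

end ProjectiveDistance

section Proximal

variable {W' : Type*} [NormedAddCommGroup W'] [NormedSpace ℝ W'] [FiniteDimensional ℝ W']

lemma IsProximal.topEig_spec {f : W →ₗ[ℝ] W} (hf : IsProximal f) :
    (f.charpoly.map (algebraMap ℝ ℂ)).roots.count (topEig f : ℂ) = 1 ∧
    ∀ μ ∈ (f.charpoly.map (algebraMap ℝ ℂ)).roots, μ ≠ (topEig f : ℂ) → ‖μ‖ < |topEig f| := by
  rw [topEig, dif_pos hf]
  exact hf.choose_spec

lemma topEig_eq_of_charpoly_eq {f : W →ₗ[ℝ] W} {g : W' →ₗ[ℝ] W'} (hf : IsProximal f)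
    (h : g.charpoly = f.charpoly) : topEig g = topEig f := by
  have hg : IsProximal g := by rw [IsProximal, h]; exact hf
  obtain ⟨hf1, hfmax⟩ := hf.topEig_spec
  obtain ⟨hg1, hgmax⟩ := hg.topEig_spec
  rw [h] at hg1 hgmax
  by_contra hne
  have hne' : (topEig g : ℂ) ≠ topEig f := by exact_mod_cast hne
  have hlt := hfmax _ (Multiset.count_pos.1 (by omega)) hne'
  have hgt := hgmax _ (Multiset.count_pos.1 (by omega)) hne'.symm
  rw [Complex.norm_real, Real.norm_eq_abs] at hlt hgt
  exact lt_asymm hlt hgt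

lemma attLine_eq_eigenspace (f : W →ₗ[ℝ] W) :
    attLine f = Module.End.eigenspace f (topEig f) := by
  ext v
  simp [attLine, sub_eq_zero]

lemma finrank_attLine_le_one {f : W →ₗ[ℝ] W} (hf : IsProximal f) :
    Module.finrank ℝ (attLine f) ≤ 1 := by
  have hmult : f.charpoly.rootMultiplicity (topEig f) = 1 := by
    rw [Polynomial.eq_rootMultiplicity_map (algebraMap ℝ ℂ).injective, ← Polynomial.count_roots]
    exact hf.topEig_spec.1
  rw [attLine_eq_eigenspace, ← hmult]
  exact LinearMap.finrank_eigenspace_le f (topEig f)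

lemma repHyp_spec {f : W →ₗ[ℝ] W} (h : repHyp f ≠ ⊥) :
    (repHyp f).map f ≤ repHyp f ∧ IsCompl (attLine f) (repHyp f) := by
  have hex : ∃ H : Submodule ℝ W, H.map f ≤ H ∧ IsCompl (attLine f) H := by
    by_contra hex
    exact h (dif_neg hex)
  rw [repHyp, dif_pos hex]
  exact hex.choose_spec

end Proximal

lemma apply_eq_zero_of_mem_invariant {V : Type*} [AddCommGroup V] [Module ℝ V]
    [FiniteDimensional ℝ V] {f : V →ₗ[ℝ] V} {μ : ℝ} {θ : V →ₗ[ℝ] ℝ}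
    (hθ : ∀ v, θ (f v) = μ * θ v) {H : Submodule ℝ V} (hH : H.map f ≤ H)
    (hdisj : Disjoint (LinearMap.ker (f - μ • LinearMap.id)) H) {v : V} (hv : v ∈ H) :
    θ v = 0 := by
  have hHf : ∀ w ∈ H, (f - μ • LinearMap.id : V →ₗ[ℝ] V) w ∈ H := fun w hw =>
    H.sub_mem (hH (Submodule.mem_map_of_mem hw)) (H.smul_mem μ hw)
  have hinj : Function.Injective ((f - μ • LinearMap.id).restrict hHf) :=
    (LinearMap.injective_restrict_iff hHf).2 hdisj.symm
  obtain ⟨w, hw⟩ := LinearMap.injective_iff_surjective.1 hinj ⟨v, hv⟩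
  have hw' : f w - μ • (w : V) = v := congrArg Subtype.val hw
  rw [← hw', map_sub, map_smul, hθ, smul_eq_mul, sub_self]

lemma ker_le_repHyp {f : W →ₗ[ℝ] W} (hf : IsProximal f) (hH : repHyp f ≠ ⊥)
    {θ : W →ₗ[ℝ] ℝ} (hθ0 : θ ≠ 0) (hθ : ∀ v, θ (f v) = topEig f * θ v) :
    LinearMap.ker θ ≤ repHyp f := by
  obtain ⟨hmap, hcompl⟩ := repHyp_spec hH
  have hle : repHyp f ≤ LinearMap.ker θ := fun v hv =>
    apply_eq_zero_of_mem_invariant hθ hmap hcompl.disjoint hv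
  refine (Submodule.eq_of_le_of_finrank_le hle ?_).ge
  have := Submodule.finrank_add_eq_of_isCompl hcompl
  have := Module.Dual.finrank_ker_add_one_of_ne_zero hθ0
  have := finrank_attLine_le_one hf
  omega

section Hyperplane

open scoped RealInnerProductSpace

variable {F : Type*} [NormedAddCommGroup F] [InnerProductSpace ℝ F] [CompleteSpace F]

lemma exists_unit_mem_ker_near {θ : StrongDual ℝ F} (hθ : ‖θ‖ = 1) {x : F} (hx : ‖x‖ = 1)
    (ht : |θ x| < 1) : ∃ y, θ y = 0 ∧ ‖y‖ = 1 ∧ ‖x - y‖ ≤ 2 * |θ x| := by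
  set t := θ x
  -- `n` is the unit normal of `ker θ` and `h` the orthogonal projection of `x` onto `ker θ`
  set n := (InnerProductSpace.toDual ℝ F).symm θ
  have hn_apply : ∀ v, ⟪n, v⟫ = θ v := fun v => InnerProductSpace.toDual_symm_apply
  have hn : ‖n‖ = 1 := by rw [LinearIsometryEquiv.norm_map, hθ]
  set h := x - t • n
  have hθh : θ h = 0 := by
    rw [map_sub, map_smul, ← hn_apply n, real_inner_self_eq_norm_sq, hn]; simp [t]
  have hh2 : ‖h‖ ^ 2 = 1 - t ^ 2 := by
    rw [norm_sub_sq_real, real_inner_smul_right, real_inner_comm, hn_apply, norm_smul, hx, hn,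
      Real.norm_eq_abs, mul_one, sq_abs]
    change 1 ^ 2 - 2 * (t * t) + t ^ 2 = 1 - t ^ 2
    ring
  have ht2 : t ^ 2 < 1 := by nlinarith [abs_nonneg t, sq_abs t]
  have hh0 : h ≠ 0 := by
    rintro h0
    rw [h0, norm_zero] at hh2
    linarith
  have hh1 : ‖h‖ ≤ 1 := by nlinarith [norm_nonneg h]
  refine ⟨‖h‖⁻¹ • h, by simp [hθh], norm_smul_inv_norm hh0, ?_⟩
  have hxh : ‖x - h‖ = |t| := by simp [h, norm_smul, hn]
  have hhy : ‖h - ‖h‖⁻¹ • h‖ = 1 - ‖h‖ := by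
    have hpos : 0 < ‖h‖ := norm_pos_iff.2 hh0
    have hinv : 1 ≤ ‖h‖⁻¹ := one_le_inv₀ hpos |>.2 hh1
    have hsmul : h - ‖h‖⁻¹ • h = (1 - ‖h‖⁻¹) • h := by rw [sub_smul, one_smul]
    rw [hsmul, norm_smul, Real.norm_eq_abs,
      abs_of_nonpos (by linarith), neg_sub, sub_mul, inv_mul_cancel₀ hpos.ne', one_mul]
  calc ‖x - ‖h‖⁻¹ • h‖ ≤ ‖x - h‖ + ‖h - ‖h‖⁻¹ • h‖ := norm_sub_le_norm_sub_add_norm_sub _ _ _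
    _ = |t| + (1 - ‖h‖) := by rw [hxh, hhy]
    _ ≤ 2 * |t| := by nlinarith [abs_nonneg t, sq_abs t, norm_nonneg h]

lemma sdist_lt_of_abs_apply_lt {A H : Submodule ℝ F} {θ : StrongDual ℝ F} (hθ : ‖θ‖ = 1)
    (hker : ∀ y, θ y = 0 → y ∈ H) {a x : F} (ha : a ∈ A) (ha1 : ‖a‖ = 1) (hx1 : ‖x‖ = 1)
    {δ : ℝ} (hδ : δ < 1) (hxa : ‖x - a‖ < δ) (hθx : |θ x| < δ) : sdist A H < 3 * δ := by
  obtain ⟨y, hy0, hy1, hxy⟩ := exists_unit_mem_ker_near hθ hx1 (hθx.trans hδ)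
  calc sdist A H ≤ ‖a - y‖ := sdist_le_norm_sub ha (hker y hy0) ha1 hy1
    _ ≤ ‖a - x‖ + ‖x - y‖ := norm_sub_le_norm_sub_add_norm_sub _ _ _
    _ < 3 * δ := by rw [norm_sub_rev] at hxa; linarith

end Hyperplane

lemma charpoly_dualTranspose {K V : Type*} [Field K] [AddCommGroup V] [Module K V]
    [FiniteDimensional K V] (f : V →ₗ[K] V) :
    (Module.Dual.transpose (R := K) f).charpoly = f.charpoly := by
  let b := Module.finBasis K V
  rw [← LinearMap.charpoly_toMatrix _ b.dualBasis, LinearMap.toMatrix_transpose,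
    Matrix.charpoly_transpose, LinearMap.charpoly_toMatrix]

section Dual

variable {d : ℕ}

lemma dualEnd_eq_conj_transpose (g : SL d) :
    dualEnd g = (LinearMap.toContinuousLinearMap : Module.Dual ℝ (E d) ≃ₗ[ℝ] Dual' d).conj
      (Module.Dual.transpose (R := ℝ) (toEnd g⁻¹)) := by
  ext θ v
  simp [dualEnd, toCLM, LinearEquiv.conj_apply, Module.Dual.transpose_apply]

lemma charpoly_dualEnd (g : SL d) : (dualEnd g).charpoly = (toEnd g⁻¹).charpoly := by
  rw [dualEnd_eq_conj_transpose, LinearEquiv.charpoly_conj, charpoly_dualTranspose]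

lemma IsProximal.of_dualEnd {g : SL d} (hg : IsProximal (dualEnd g)) :
    IsProximal (toEnd g⁻¹) := by
  rwa [IsProximal, ← charpoly_dualEnd]

lemma apply_toEnd_inv_of_mem_attLine_dualEnd {g : SL d} (hg : IsProximal (dualEnd g))
    {θ : Dual' d} (hθ : θ ∈ attLine (dualEnd g)) (v : E d) :
    θ (toEnd g⁻¹ v) = topEig (toEnd g⁻¹) * θ v := by
  rw [← topEig_eq_of_charpoly_eq hg.of_dualEnd (charpoly_dualEnd g)]
  have hθ' : dualEnd g θ = topEig (dualEnd g) • θ := by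
    simpa [attLine, sub_eq_zero] using hθ
  simpa [dualEnd, toCLM] using congrArg (fun φ : Dual' d => φ v) hθ'

lemma mem_repHyp_of_mem_attLine_dualEnd {g : SL d} (hg : IsProximal (dualEnd g))
    (hH : repHyp (toEnd g⁻¹) ≠ ⊥) {θ : Dual' d} (hθ : θ ∈ attLine (dualEnd g)) (hθ0 : θ ≠ 0)
    {y : E d} (hy : θ y = 0) : y ∈ repHyp (toEnd g⁻¹) := by
  refine ker_le_repHyp hg.of_dualEnd hH ?_ (apply_toEnd_inv_of_mem_attLine_dualEnd hg hθ) hy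
  rwa [Ne, ← ContinuousLinearMap.toLinearMap_zero, ContinuousLinearMap.coe_inj]

lemma sup_dualKer_eq_top {X : Submodule ℝ (E d)} {Y : Submodule ℝ (Dual' d)} (hY : IsLine Y)
    {x : E d} {θ : Dual' d} (hx : x ∈ X) (hθ : θ ∈ Y) (hθx : θ x ≠ 0) : X ⊔ dualKer Y = ⊤ := by
  have hθ0 : θ ≠ 0 := by rintro rfl; exact hθx rfl
  rw [eq_top_iff]
  intro v _
  have hmem : v - (θ v / θ x) • x ∈ dualKer Y := by
    intro φ hφ
    obtain ⟨c, hc⟩ := exists_smul_eq_of_finrank_eq_one hY (x := ⟨θ, hθ⟩)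
      (by simpa using hθ0) ⟨φ, hφ⟩
    obtain rfl : c • θ = φ := congrArg Subtype.val hc
    simp [field]
  exact Submodule.mem_sup.2 ⟨_, X.smul_mem _ hx, _, hmem, add_sub_cancel _ _⟩

end Dual

theorem statement1_general (d r : ℕ) (ε : ℝ) (hε : 0 < ε) (γ : Fin (2 * r) → SL d)
    (hS : PrimalSchottky ε γ) (hS' : DualSchottky ε γ)
    (i j : Fin (2 * r)) (hij : i ≠ j)
    (X : Submodule ℝ (E d)) (hX : IsLine X)
    (hXb : sdist X (attLine (toEnd (γ i))) ≤ ε)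
    (Y : Submodule ℝ (Dual' d)) (hY : IsLine Y)
    (hYb : sdist Y (attLine (dualEnd (γ j))) ≤ ε) :
    X ⊔ dualKer Y = ⊤ := by
  set f := toEnd (γ j)⁻¹
  have hfar : 6 * ε ≤ sdist (attLine (toEnd (γ i))) (repHyp f) := hS.2 i j hij
  obtain ⟨⟨a₀, ha₀, ha₀1⟩, ⟨b, hb, hb1⟩⟩ :=
    exists_unit_of_sdist_pos (hfar.trans_lt' (by linarith))
  obtain ⟨hθ₁, -⟩ := exists_unit_of_sdist_pos ((hS'.2 j i hij.symm).trans_lt' (by linarith))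
  obtain ⟨x, hxX, a, ha, hx1, ha1, hxa⟩ := exists_norm_sub_lt_of_sdist_lt
    (hXb.trans_lt (by linarith : ε < 2 * ε)) hX.exists_norm_eq_one ⟨a₀, ha₀, ha₀1⟩
  obtain ⟨θ, hθY, θ₀, hθ₀, -, hθ₀1, hθθ₀⟩ := exists_norm_sub_lt_of_sdist_lt
    (hYb.trans_lt (by linarith : ε < 2 * ε)) hY.exists_norm_eq_one hθ₁
  refine sup_dualKer_eq_top hY hxX hθY fun hθx => ?_
  have hε2 : 2 * ε < 1 := by
    have := (hfar.trans (sdist_le_norm_sub ha₀ hb ha₀1 hb1)).trans (norm_sub_le a₀ b)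
    linarith
  have hker : ∀ y, θ₀ y = 0 → y ∈ repHyp f :=
    fun y => mem_repHyp_of_mem_attLine_dualEnd (hS'.1 j).1
      ((Submodule.ne_bot_iff _).2 ⟨b, hb, by rintro rfl; simp at hb1⟩) hθ₀
      (norm_ne_zero_iff.1 (by simp [hθ₀1]))
  have hθ₀x : |θ₀ x| < 2 * ε := by
    calc |θ₀ x| = |(θ - θ₀) x| := by simp [hθx]
      _ ≤ ‖θ - θ₀‖ := by simpa [hx1] using (θ - θ₀).le_opNorm x
      _ < 2 * ε := hθθ₀
  have := sdist_lt_of_abs_apply_lt hθ₀1 hker ha ha1 hx1 hε2 hxa hθ₀x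
  linarith

/-- transversality of the attracting neighborhoods. -/
theorem statement1 (d r : ℕ) (hd : 2 ≤ d) (hr : 1 ≤ r) (ε : ℝ) (hε : 0 < ε)
    (γ : Fin (2 * r) → SL d) (hdist : Function.Injective γ)
    (hprox : ∀ i, IsProximal (toEnd (γ i))) (hsym : SymmFam γ)
    (hS : PrimalSchottky ε γ) (hS' : DualSchottky ε γ)
    (i j : Fin (2 * r)) (hij : i ≠ j)
    (X : Submodule ℝ (E d)) (hX : IsLine X)
    (hXb : sdist X (attLine (toEnd (γ i))) ≤ ε)
    (Y : Submodule ℝ (Dual' d)) (hY : IsLine Y)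
    (hYb : sdist Y (attLine (dualEnd (γ j))) ≤ ε) :
    X ⊔ dualKer Y = ⊤ :=
  statement1_general d r ε hε γ hS hS' i j hij X hX hXb Y hY hYb

end Amalgam
end
end

section
/- Let d ≥ 2, C ∈ (0,1), and let S ⊂ SL_d(ℝ) be a symmetric set such that: (i) for every reduced word x₀, x₁, …, x_n in S one has ‖x₀ x₁ ⋯ x_n‖ ≥ C^{n+2} · ‖x₀‖ ⋯ ‖x_n‖, and (ii) every γ ∈ S satisfies ‖γ‖² ≥ C⁻³ · ‖C₂(γ)‖. Then every reduced word x₀, x₁, …, x_n in S satisfies ‖x₀ x₁ ⋯ x_n‖² ≥ C^{−(n−1)} · ‖C₂(x₀ x₁ ⋯ x_n)‖. In particular, for every infinite reduced word (xᵢ)_{i∈ℕ} in S, log(‖x₀ ⋯ x_n‖² / ‖C₂(x₀ ⋯ x_n)‖) → +∞ as n → ∞. -/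
/-!
Cauchy–Binet for `2 × 2` minors makes the second compound multiplicative, so
`‖C₂(x₀ ⋯ xₙ)‖ ≤ ∏ ‖C₂(xᵢ)‖ ≤ C^{3(n+1)} (∏ ‖xᵢ‖)²`, while hypothesis (i) gives
`∏ ‖xᵢ‖ ≤ C^{-(n+2)} ‖x₀ ⋯ xₙ‖`; the exponents combine to `C^{n-1}`. Along an infinite reduced
word the ratio `‖g‖² / ‖C₂(g)‖` is then at least `C^{1-n} → ∞`, the denominator being positive
because `C₂(g)` is invertible for `g ∈ SL_d(ℝ)` once `d ≥ 2`.
-/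

open Polynomial Filter
open scoped Classical

noncomputable section

namespace Amalgam

variable {W : Type*} [NormedAddCommGroup W] [NormedSpace ℝ W]

variable [FiniteDimensional ℝ W]

lemma sum_prod_eq_sum_lt_add_swap {ι M : Type*} [Fintype ι] [LinearOrder ι]
    [AddCommMonoid M] (f : ι × ι → M) (hf : ∀ i, f (i, i) = 0) :
    ∑ p, f p = ∑ p : {p : ι × ι // p.1 < p.2}, (f p.1 + f p.1.swap) := by
  have hsplit : ∀ p : ι × ι,
      f p = (if p.1 < p.2 then f p else 0) + (if p.2 < p.1 then f p else 0) := by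
    rintro ⟨i, j⟩
    rcases lt_trichotomy i j with h | rfl | h
    · simp [h, h.not_gt]
    · simp [hf]
    · simp [h, h.not_gt]
  have hswap : ∑ p : ι × ι, (if p.2 < p.1 then f p else 0)
      = ∑ p : ι × ι, (if p.1 < p.2 then f p.swap else 0) :=
    Fintype.sum_equiv (Equiv.prodComm ι ι) _ _ fun _ => rfl
  rw [Fintype.sum_congr _ _ hsplit, Finset.sum_add_distrib, hswap, ← Finset.sum_add_distrib,
    ← Finset.sum_subtype {p : ι × ι | p.1 < p.2} (by simp) fun p => f p + f p.swap,
    Finset.sum_filter]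
  exact Finset.sum_congr rfl fun p _ => by split_ifs <;> simp

lemma cauchy_binet_two {ι R : Type*} [Fintype ι] [LinearOrder ι] [CommRing R]
    (a₁ a₂ b₁ b₂ : ι → R) :
    (∑ x, a₁ x * b₁ x) * (∑ x, a₂ x * b₂ x) - (∑ x, a₁ x * b₂ x) * (∑ x, a₂ x * b₁ x)
      = ∑ p : {p : ι × ι // p.1 < p.2},
          (a₁ p.1.1 * a₂ p.1.2 - a₁ p.1.2 * a₂ p.1.1) *
          (b₁ p.1.1 * b₂ p.1.2 - b₂ p.1.1 * b₁ p.1.2) := by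
  have hexpand : (∑ x, a₁ x * b₁ x) * (∑ x, a₂ x * b₂ x)
      - (∑ x, a₁ x * b₂ x) * (∑ x, a₂ x * b₁ x)
      = ∑ p : ι × ι, a₁ p.1 * a₂ p.2 * (b₁ p.1 * b₂ p.2 - b₂ p.1 * b₁ p.2) := by
    simp only [Finset.sum_mul_sum, ← Finset.sum_sub_distrib, Fintype.sum_prod_type]
    exact Finset.sum_congr rfl fun x _ => Finset.sum_congr rfl fun y _ => by ring
  rw [hexpand, sum_prod_eq_sum_lt_add_swap _ fun i => by ring]
  exact Finset.sum_congr rfl fun p _ => by simp only [Prod.fst_swap, Prod.snd_swap]; ring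

section Compound

variable {d : ℕ}

lemma compound2_mul (A B : Matrix (Fin d) (Fin d) ℝ) :
    compound2 (A * B) = compound2 A * compound2 B := by
  ext ⟨⟨i, j⟩, _⟩ ⟨⟨k, l⟩, _⟩
  simp only [compound2, Matrix.mul_apply]
  exact cauchy_binet_two (A i) (A j) (fun a => B a k) (fun a => B a l)

lemma compound2_one : compound2 (1 : Matrix (Fin d) (Fin d) ℝ) = 1 := by
  ext ⟨⟨i, j⟩, hij⟩ ⟨⟨k, l⟩, hkl⟩
  have : ¬(i = l ∧ j = k) := fun ⟨rfl, rfl⟩ => lt_asymm hij hkl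
  simp only [compound2, Matrix.one_apply, Subtype.mk.injEq, Prod.mk.injEq]
  split_ifs <;> simp_all

lemma c2norm_eq_norm_toEuclideanCLM (A : Matrix (Fin d) (Fin d) ℝ) :
    c2norm A = ‖Matrix.toEuclideanCLM (𝕜 := ℝ) (compound2 A)‖ := rfl

lemma c2norm_nonneg (A : Matrix (Fin d) (Fin d) ℝ) : 0 ≤ c2norm A := norm_nonneg _

lemma c2norm_mul_le (A B : Matrix (Fin d) (Fin d) ℝ) :
    c2norm (A * B) ≤ c2norm A * c2norm B := by
  simp only [c2norm_eq_norm_toEuclideanCLM, compound2_mul, map_mul]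
  exact norm_mul_le _ _

lemma c2norm_one_le : c2norm (1 : Matrix (Fin d) (Fin d) ℝ) ≤ 1 := by
  rw [c2norm_eq_norm_toEuclideanCLM, compound2_one, map_one]
  exact ContinuousLinearMap.norm_id_le

lemma c2norm_one (hd : 2 ≤ d) : c2norm (1 : Matrix (Fin d) (Fin d) ℝ) = 1 := by
  have : Nonempty {p : Fin d × Fin d // p.1 < p.2} :=
    ⟨⟨(⟨0, by omega⟩, ⟨1, by omega⟩), Fin.mk_lt_mk.2 zero_lt_one⟩⟩
  rw [c2norm_eq_norm_toEuclideanCLM, compound2_one, map_one, norm_one]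

lemma c2norm_pos_of_isUnit (hd : 2 ≤ d) {A : Matrix (Fin d) (Fin d) ℝ} (hA : IsUnit A) :
    0 < c2norm A := by
  obtain ⟨u, rfl⟩ := hA
  have h := c2norm_mul_le (u : Matrix (Fin d) (Fin d) ℝ) ↑u⁻¹
  rw [Units.mul_inv, c2norm_one hd] at h
  exact (c2norm_nonneg _).lt_of_ne fun h0 => by rw [← h0, zero_mul] at h; linarith

lemma c2norm_list_prod_le (l : List (SL d)) (f : SL d → ℝ)
    (hf : ∀ g ∈ l, c2norm (g : Matrix (Fin d) (Fin d) ℝ) ≤ f g) :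
    c2norm ((l.prod : SL d) : Matrix (Fin d) (Fin d) ℝ) ≤ (l.map f).prod := by
  induction l with
  | nil => exact c2norm_one_le
  | cons g l ih =>
    rw [List.prod_cons, Matrix.SpecialLinearGroup.coe_mul, List.map_cons, List.prod_cons]
    have hg := hf g List.mem_cons_self
    exact (c2norm_mul_le _ _).trans <| mul_le_mul hg
      (ih fun a ha => hf a (List.mem_cons_of_mem g ha)) (c2norm_nonneg _)
      ((c2norm_nonneg _).trans hg)

end Compound

lemma c2norm_word_le {d : ℕ} {C : ℝ} (hC : 0 < C) (w : List (SL d))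
    (hnorm : C ^ (w.length + 1) * (w.map opN).prod ≤ opN w.prod)
    (hletter : ∀ g ∈ w,
      C ^ (-3 : ℤ) * c2norm ((g : SL d) : Matrix (Fin d) (Fin d) ℝ) ≤ opN g ^ 2) :
    C ^ (2 - (w.length : ℤ)) * c2norm ((w.prod : SL d) : Matrix (Fin d) (Fin d) ℝ)
      ≤ opN w.prod ^ 2 := by
  have hcompound : ∀ g ∈ w, c2norm ((g : SL d) : Matrix (Fin d) (Fin d) ℝ) ≤ C ^ 3 * opN g ^ 2 :=
    fun g hg => by
      have := hletter g hg
      rwa [zpow_neg, zpow_ofNat, inv_mul_le_iff₀ (by positivity)] at this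
  have hprod : (w.map fun g => C ^ 3 * opN g ^ 2).prod
      = C ^ (3 * w.length) * (w.map opN).prod ^ 2 := by
    simp [List.prod_map_mul, sq, pow_mul]
  have hP : 0 ≤ (w.map opN).prod :=
    List.prod_nonneg fun a ha => by
      obtain ⟨g, _, rfl⟩ := List.mem_map.1 ha
      exact norm_nonneg _
  calc C ^ (2 - (w.length : ℤ)) * c2norm ((w.prod : SL d) : Matrix (Fin d) (Fin d) ℝ)
      ≤ C ^ (2 - (w.length : ℤ)) * (C ^ (3 * w.length) * (w.map opN).prod ^ 2) := by
        rw [← hprod]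
        gcongr
        exact c2norm_list_prod_le w _ hcompound
    _ = (C ^ (w.length + 1) * (w.map opN).prod) ^ 2 := by
        rw [zpow_sub₀ hC.ne', zpow_natCast]
        field_simp
        ring
    _ ≤ opN w.prod ^ 2 := by gcongr

lemma IsInfReducedWord.isReducedWord_range {d : ℕ} {S : Set (SL d)} {x : ℕ → SL d}
    (hx : IsInfReducedWord S x) (n : ℕ) : IsReducedWord S ((List.range (n + 1)).map x) := by
  refine ⟨by simp, fun a ha => ?_, ?_⟩
  · obtain ⟨i, _, rfl⟩ := List.mem_map.1 ha
    exact hx.1 i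
  · rw [List.Chain', List.isChain_map]
    exact (List.isChain_range_succ _ n).2 fun m _ => hx.2 m

lemma tendsto_zpow_one_sub_atTop {C : ℝ} (hC : C ∈ Set.Ioo (0 : ℝ) 1) :
    Tendsto (fun n : ℕ => C ^ (1 - (n : ℤ))) atTop atTop := by
  have hpow : ∀ n : ℕ, C ^ (1 - (n : ℤ)) = C * C⁻¹ ^ n := fun n => by
    rw [zpow_sub₀ hC.1.ne', zpow_one, zpow_natCast, inv_pow, div_eq_mul_inv]
  simp only [hpow]
  exact (tendsto_pow_atTop_atTop_of_one_lt (one_lt_inv₀ hC.1 |>.2 hC.2)).const_mul_atTop hC.1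

lemma tendsto_log_div_atTop_of_zpow_le {C : ℝ} (hC : C ∈ Set.Ioo (0 : ℝ) 1) {a b : ℕ → ℝ}
    (hb : ∀ n, 0 < b n) (hab : ∀ n : ℕ, C ^ (1 - (n : ℤ)) * b n ≤ a n) :
    Tendsto (fun n => Real.log (a n / b n)) atTop atTop :=
  Real.tendsto_log_atTop.comp <| tendsto_atTop_mono
    (fun n => (le_div_iff₀ (hb n)).2 (hab n)) (tendsto_zpow_one_sub_atTop hC)

theorem statement14_general (d : ℕ) (hd : 2 ≤ d) (C : ℝ) (hC : C ∈ Set.Ioo (0 : ℝ) 1)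
    (S : Set (SL d))
    (h1 : ∀ w : List (SL d), IsReducedWord S w →
      C ^ (w.length + 1) * (w.map opN).prod ≤ opN w.prod)
    (h2 : ∀ g ∈ S, C ^ (-3 : ℤ) * c2norm ((g : SL d) : Matrix (Fin d) (Fin d) ℝ) ≤ opN g ^ 2) :
    (∀ w : List (SL d), IsReducedWord S w →
      C ^ (2 - (w.length : ℤ)) * c2norm ((w.prod : SL d) : Matrix (Fin d) (Fin d) ℝ)
        ≤ opN w.prod ^ 2) ∧
    (∀ x : ℕ → SL d, IsInfReducedWord S x →
      Tendsto (fun n => Real.log (opN (wordProd x n) ^ 2 /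
        c2norm ((wordProd x n : SL d) : Matrix (Fin d) (Fin d) ℝ))) atTop atTop) := by
  have hword : ∀ w : List (SL d), IsReducedWord S w →
      C ^ (2 - (w.length : ℤ)) * c2norm ((w.prod : SL d) : Matrix (Fin d) (Fin d) ℝ)
        ≤ opN w.prod ^ 2 :=
    fun w hw => c2norm_word_le hC.1 w (h1 w hw) fun g hg => h2 g (hw.2.1 g hg)
  refine ⟨hword, fun x hx => tendsto_log_div_atTop_of_zpow_le hC
    (fun n => c2norm_pos_of_isUnit hd ?_) fun n => ?_⟩
  · exact (Matrix.isUnit_iff_isUnit_det _).2 (by simp)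
  · have h := hword _ (hx.isReducedWord_range n)
    rw [List.length_map, List.length_range] at h
    unfold wordProd
    convert h using 3
    push_cast
    ring

/-- the gap between the first and second singular values grows along
reduced words. -/
theorem statement14 (d : ℕ) (hd : 2 ≤ d) (C : ℝ) (hC : C ∈ Set.Ioo (0 : ℝ) 1)
    (S : Set (SL d)) (hsym : ∀ g ∈ S, g⁻¹ ∈ S)
    (h1 : ∀ w : List (SL d), IsReducedWord S w →
      C ^ (w.length + 1) * (w.map opN).prod ≤ opN w.prod)
    (h2 : ∀ g ∈ S, C ^ (-3 : ℤ) * c2norm ((g : SL d) : Matrix (Fin d) (Fin d) ℝ) ≤ opN g ^ 2) :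
    (∀ w : List (SL d), IsReducedWord S w →
      C ^ (2 - (w.length : ℤ)) * c2norm ((w.prod : SL d) : Matrix (Fin d) (Fin d) ℝ)
        ≤ opN w.prod ^ 2) ∧
    (∀ x : ℕ → SL d, IsInfReducedWord S x →
      Tendsto (fun n => Real.log (opN (wordProd x n) ^ 2 /
        c2norm ((wordProd x n : SL d) : Matrix (Fin d) (Fin d) ℝ))) atTop atTop) :=
  statement14_general d hd C hC S h1 h2

end Amalgam
end
end
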